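/- arXiv:math/0406584 — 2 statements merged into one kernel-verified Lean document; each statement's English description precedes it below -/
import Mathlib

section
/- The vector (0,t) does not belong to the extended tangent space T_e𝒜(h) of h(ξ,t) = (ξ, ξt²+t³); consequently the extended codimension of h (the dimension of ℰ²_{ξ,t}/T_e𝒜(h)) is at least 1. -/
/-- The vector `(0,t)` does not belong to the extended tangent space
`T_e𝒜(h) = ℰ_{ξ,t}·⟨∂_ξ h, ∂_t h⟩ + h*(ℰ_{x,y})·ℝ²` of `h(ξ,t) = (ξ, ξt²+t³)`,
where `∂_ξ h = (1, t²)` and `∂_t h = (0, 2ξt+3t²)`.  Consequently the extended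
codimension of `h` is at least `1`: there is an element of `ℰ²_{ξ,t}` not in
`T_e𝒜(h)`. -/
theorem stmt6 (h : ℝ × ℝ → ℝ × ℝ)
    (hh : h = fun p => (p.1, p.1 * p.2 ^ 2 + p.2 ^ 3)) :
    ¬ ∃ a b g₁ g₂ : ℝ × ℝ → ℝ,
        ContDiff ℝ (⊤ : ℕ∞) a ∧ ContDiff ℝ (⊤ : ℕ∞) b ∧ ContDiff ℝ (⊤ : ℕ∞) g₁ ∧ ContDiff ℝ (⊤ : ℕ∞) g₂ ∧
        ∀ᶠ p in nhds (0 : ℝ × ℝ),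
          (0 : ℝ) = a p * 1 + b p * 0 + g₁ (h p) ∧
          p.2 = a p * p.2 ^ 2 + b p * (2 * p.1 * p.2 + 3 * p.2 ^ 2) + g₂ (h p) := by
  rintro ⟨a, b, g₁, g₂, ha, hb, hg₁, hg₂, hev⟩
  subst hh
  -- restrict to the curve c(t) = (0, t)
  set c : ℝ → ℝ × ℝ := fun t => ((0 : ℝ), t) with hc
  have hcc : Continuous c := by fun_prop
  have hct : Filter.Tendsto c (nhds 0) (nhds (0 : ℝ × ℝ)) := by
    have := hcc.tendsto 0
    exact this
  have hev' : ∀ᶠ t in nhds (0 : ℝ),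
      t = a (c t) * t ^ 2 + b (c t) * (2 * 0 * t + 3 * t ^ 2)
        + g₂ ((0 : ℝ), (0 : ℝ) * t ^ 2 + t ^ 3) := by
    filter_upwards [hct.eventually hev] with t ht
    simpa [c] using ht.2
  -- the right-hand side has derivative 0 at 0
  set φ : ℝ → ℝ := fun t => a (c t) * t ^ 2 + b (c t) * (2 * 0 * t + 3 * t ^ 2)
      + g₂ ((0 : ℝ), (0 : ℝ) * t ^ 2 + t ^ 3) with hφ
  have hcd : Differentiable ℝ c := (differentiable_const (0 : ℝ)).prodMk differentiable_id
  have hac : DifferentiableAt ℝ (fun t => a (c t)) 0 :=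
    ((ha.differentiable (by simp)).comp hcd).differentiableAt
  have hbc : DifferentiableAt ℝ (fun t => b (c t)) 0 :=
    ((hb.differentiable (by simp)).comp hcd).differentiableAt
  have hsq : HasDerivAt (fun t : ℝ => t ^ 2) 0 0 := by
    simpa using (hasDerivAt_pow 2 (0 : ℝ))
  have hsq' : HasDerivAt (fun t : ℝ => 2 * 0 * t + 3 * t ^ 2) 0 0 := by
    have h1 : HasDerivAt (fun t : ℝ => 2 * 0 * t) (2 * 0) 0 := by
      simpa using (hasDerivAt_id (0 : ℝ)).const_mul (2 * 0 : ℝ)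
    have h2 : HasDerivAt (fun t : ℝ => 3 * t ^ 2) (3 * 0) 0 := hsq.const_mul 3
    simpa [Pi.add_def] using h1.add h2
  have h1 : HasDerivAt (fun t => a (c t) * t ^ 2) 0 0 := by
    have := (hac.hasDerivAt).mul hsq
    simpa [Pi.mul_def] using this
  have h2 : HasDerivAt (fun t => b (c t) * (2 * 0 * t + 3 * t ^ 2)) 0 0 := by
    have := (hbc.hasDerivAt).mul hsq'
    simpa [Pi.mul_def] using this
  have hinner : HasDerivAt (fun t : ℝ => ((0 : ℝ), (0 : ℝ) * t ^ 2 + t ^ 3))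
      ((0 : ℝ), (0 : ℝ)) 0 := by
    have hz : HasDerivAt (fun _ : ℝ => (0 : ℝ)) 0 0 := hasDerivAt_const _ _
    have hy : HasDerivAt (fun t : ℝ => (0 : ℝ) * t ^ 2 + t ^ 3) 0 0 := by
      have hcube : HasDerivAt (fun t : ℝ => t ^ 3) 0 0 := by
        simpa using (hasDerivAt_pow 3 (0 : ℝ))
      have hzz : HasDerivAt (fun t : ℝ => (0 : ℝ) * t ^ 2) (0 * 0) 0 := hsq.const_mul 0
      simpa [Pi.add_def] using hzz.add hcube
    exact hz.prodMk hy
  have hg₂d : HasFDerivAt g₂ (fderiv ℝ g₂ ((0 : ℝ), (0 : ℝ))) ((0 : ℝ), (0 : ℝ)) :=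
    ((hg₂.differentiable (by simp)) ((0 : ℝ), (0 : ℝ))).hasFDerivAt
  have hpt : ((0 : ℝ), (0 : ℝ)) = (((0 : ℝ), (0 : ℝ) * 0 ^ 2 + 0 ^ 3) : ℝ × ℝ) := by
    norm_num
  have hg₂d' : HasFDerivAt g₂ (fderiv ℝ g₂ ((0 : ℝ), (0 : ℝ)))
      (((0 : ℝ), (0 : ℝ) * 0 ^ 2 + 0 ^ 3) : ℝ × ℝ) := hpt ▸ hg₂d
  have h3 : HasDerivAt (fun t : ℝ => g₂ ((0 : ℝ), (0 : ℝ) * t ^ 2 + t ^ 3))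
      (fderiv ℝ g₂ ((0 : ℝ), (0 : ℝ)) ((0 : ℝ), (0 : ℝ))) 0 :=
    hg₂d'.comp_hasDerivAt 0 hinner
  have h3' : HasDerivAt (fun t : ℝ => g₂ ((0 : ℝ), (0 : ℝ) * t ^ 2 + t ^ 3)) 0 0 := by
    have : fderiv ℝ g₂ ((0 : ℝ), (0 : ℝ)) ((0 : ℝ), (0 : ℝ)) = 0 := by
      simp [Prod.mk_zero_zero]
    rwa [this] at h3
  have hφd : HasDerivAt φ 0 0 := by
    have := (h1.add h2).add h3'
    simpa [hφ, Pi.add_def] using this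
  -- but φ = id eventually, and id has derivative 1
  have hid : HasDerivAt (fun t : ℝ => t) 1 0 := hasDerivAt_id 0
  have : HasDerivAt (fun t : ℝ => t) 0 0 := by
    refine hφd.congr_of_eventuallyEq ?_
    filter_upwards [hev'] with t ht
    exact ht
  have h01 : (1 : ℝ) = 0 := hid.unique this
  norm_num at h01
end

section
/- A tangential family germ in prenormal form (ξ,t) ↦ (ξ, k₀t² + (α−k₁)t³ + k₁t²ξ + t²δ(ξ,t)) with k₀ = 0 and k₁ ≠ 0, k₁ ≠ α has criminant set with exactly two branches that are smooth, transversal, and non-vertical. Concretely, for f(ξ,t) = (ξ, k₁ξt² + (α−k₁)t³) with k₁ ≠ 0 and k₁ ≠ α, the zero set of det Df is the union of the line {t = 0} and the line {2k₁ξ + 3(α−k₁)t = 0}, which are distinct transversal lines, neither equal to the vertical line {ξ = 0}. -/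
/-! The Jacobian of a map of the form `(ξ, t) ↦ (ξ, g(ξ, t))` is `∂g/∂t`, which here factors as
`t · (2k₁ξ + 3(α − k₁)t)`. The point `(3(α − k₁), −2k₁)` lies on the second line but on neither
coordinate axis, which separates that line from `{t = 0}` (as `k₁ ≠ 0`) and from `{ξ = 0}`
(as `α ≠ k₁`). -/

/-- The Jacobian determinant of a map `f : ℝ × ℝ → ℝ × ℝ` at a point `p`. -/
noncomputable def jacobianDet (f : ℝ × ℝ → ℝ × ℝ) (p : ℝ × ℝ) : ℝ :=
  (fderiv ℝ f p (1, 0)).1 * (fderiv ℝ f p (0, 1)).2 -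
    (fderiv ℝ f p (0, 1)).1 * (fderiv ℝ f p (1, 0)).2

lemma jacobianDet_fst_prodMk {g : ℝ × ℝ → ℝ} {g' : ℝ × ℝ →L[ℝ] ℝ} {p : ℝ × ℝ}
    (hg : HasFDerivAt g g' p) :
    jacobianDet (fun q => (q.1, g q)) p = g' (0, 1) := by
  rw [jacobianDet, (hasFDerivAt_fst.prodMk hg).fderiv]
  simp

lemma jacobianDet_prenormal (k₁ α : ℝ) (p : ℝ × ℝ) :
    jacobianDet (fun q : ℝ × ℝ => (q.1, k₁ * q.1 * q.2 ^ 2 + (α - k₁) * q.2 ^ 3)) p =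
      p.2 * (2 * k₁ * p.1 + 3 * (α - k₁) * p.2) := by
  have hg : HasFDerivAt (fun q : ℝ × ℝ => k₁ * q.1 * q.2 ^ 2 + (α - k₁) * q.2 ^ 3) _ p :=
    ((hasFDerivAt_fst.const_mul k₁).mul ((hasFDerivAt_snd (𝕜 := ℝ) (p := p)).pow 2)).add
      (((hasFDerivAt_snd (𝕜 := ℝ) (p := p)).pow 3).const_mul (α - k₁))
  rw [jacobianDet_fst_prodMk hg]
  simp only [Nat.add_one_sub_one, pow_one, nsmul_eq_mul, Nat.cast_ofNat, add_apply, smul_apply,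
    ContinuousLinearMap.coe_snd', smul_eq_mul, mul_one, ContinuousLinearMap.coe_fst', mul_zero,
    add_zero]
  ring

lemma setOf_mul_eq_zero {X M : Type*} [MulZeroClass M] [NoZeroDivisors M] (u v : X → M) :
    {p | u p * v p = 0} = {p | u p = 0} ∪ {p | v p = 0} := by
  ext p
  exact mul_eq_zero

lemma mem_setOf_linear_eq_zero (a b : ℝ) :
    ((b, -a) : ℝ × ℝ) ∈ {p : ℝ × ℝ | a * p.1 + b * p.2 = 0} := by
  change a * b + b * -a = 0
  ring

lemma setOf_linear_eq_zero_ne_setOf_snd_eq_zero {a : ℝ} (ha : a ≠ 0) (b : ℝ) :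
    {p : ℝ × ℝ | a * p.1 + b * p.2 = 0} ≠ {p | p.2 = 0} :=
  ne_of_mem_of_not_mem' (mem_setOf_linear_eq_zero a b) (neg_ne_zero.mpr ha)

lemma setOf_linear_eq_zero_ne_setOf_fst_eq_zero (a : ℝ) {b : ℝ} (hb : b ≠ 0) :
    {p : ℝ × ℝ | a * p.1 + b * p.2 = 0} ≠ {p | p.1 = 0} :=
  ne_of_mem_of_not_mem' (mem_setOf_linear_eq_zero a b) hb

/-- A second-type prenormal form `f(ξ,t) = (ξ, k₁ξt² + (α−k₁)t³)` with
`k₁ ≠ 0`, `α ≠ k₁` has `det Df(ξ,t) = t·(2k₁ξ + 3(α−k₁)t)`, so the criminant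
is the union of the lines `{t = 0}` and `{2k₁ξ + 3(α−k₁)t = 0}`: two distinct
smooth branches which are transversal (the determinant of their normal vectors
`(0,1)` and `(2k₁, 3(α−k₁))` is nonzero) and neither of which is the vertical
line `{ξ = 0}`. -/
theorem stmt16 (k₁ α : ℝ) (hk₁ : k₁ ≠ 0) (hα : α ≠ k₁)
    (f : ℝ × ℝ → ℝ × ℝ)
    (hf : f = fun p => (p.1, k₁ * p.1 * p.2 ^ 2 + (α - k₁) * p.2 ^ 3)) :
    (∀ p : ℝ × ℝ, jacobianDet f p = p.2 * (2 * k₁ * p.1 + 3 * (α - k₁) * p.2)) ∧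
    {p : ℝ × ℝ | jacobianDet f p = 0} =
      {p : ℝ × ℝ | p.2 = 0} ∪ {p : ℝ × ℝ | 2 * k₁ * p.1 + 3 * (α - k₁) * p.2 = 0} ∧
    {p : ℝ × ℝ | 2 * k₁ * p.1 + 3 * (α - k₁) * p.2 = 0} ≠ {p : ℝ × ℝ | p.2 = 0} ∧
    {p : ℝ × ℝ | 2 * k₁ * p.1 + 3 * (α - k₁) * p.2 = 0} ≠ {p : ℝ × ℝ | p.1 = 0} ∧
    (0 : ℝ) * (3 * (α - k₁)) - 1 * (2 * k₁) ≠ 0 := by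
  subst hf
  have h2k₁ : 2 * k₁ ≠ 0 := mul_ne_zero two_ne_zero hk₁
  have hjac := jacobianDet_prenormal k₁ α
  refine ⟨hjac, ?_, setOf_linear_eq_zero_ne_setOf_snd_eq_zero h2k₁ _,
    setOf_linear_eq_zero_ne_setOf_fst_eq_zero _ ?_, ?_⟩
  · simp only [hjac]
    exact setOf_mul_eq_zero _ _
  · exact mul_ne_zero three_ne_zero (sub_ne_zero.mpr hα)
  · simpa using h2k₁
end
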